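/- If x ∈ R_k is nonzero, then 1/x ∈ R_{ck} for some absolute constant c (one may take c = 9 for k ≥ 1). -/
import Mathlib

/-- `R k` is the set of complex numbers expressible as `(a + b√2 + ci + di√2)/q` with
`a, b, c, d, q ∈ ℤ`, `q ≠ 0`, and all of `|a|, |b|, |c|, |d|, |q|` at most `2^k`. -/
def Rset (k : ℕ) : Set ℂ :=
  {z | ∃ a b c d q : ℤ, q ≠ 0 ∧ |a| ≤ 2 ^ k ∧ |b| ≤ 2 ^ k ∧ |c| ≤ 2 ^ k ∧ |d| ≤ 2 ^ k ∧
    |q| ≤ 2 ^ k ∧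
    z = ((a : ℂ) + (b : ℂ) * (Real.sqrt 2 : ℂ) + (c : ℂ) * Complex.I
      + (d : ℂ) * Complex.I * (Real.sqrt 2 : ℂ)) / (q : ℂ)}

private lemma sq_le_of_abs_le {x M : ℤ} (h : |x| ≤ M) : x ^ 2 ≤ M ^ 2 := by
  have := pow_le_pow_left₀ (abs_nonneg x) h 2
  rwa [sq_abs] at this

private lemma aux_bound {A B x y q e M : ℤ} (hM : 0 ≤ M) (hx : |x| ≤ M) (hy : |y| ≤ M)
    (hq : |q| ≤ M) (hA : |A| ≤ 6 * M ^ 2) (hB : |B| ≤ 4 * M ^ 2) (he : |e| ≤ 2) :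
    |q * (A * x - e * (B * y))| ≤ 14 * M ^ 4 := by
  have h1 : |A * x| ≤ 6 * M ^ 2 * M := by
    rw [abs_mul]; exact mul_le_mul hA hx (abs_nonneg x) (by positivity)
  have h2 : |B * y| ≤ 4 * M ^ 2 * M := by
    rw [abs_mul]; exact mul_le_mul hB hy (abs_nonneg y) (by positivity)
  have h3 : |e * (B * y)| ≤ 2 * (4 * M ^ 2 * M) := by
    rw [abs_mul]; exact mul_le_mul he h2 (abs_nonneg _) (by norm_num)
  have h4 : |A * x - e * (B * y)| ≤ 14 * M ^ 3 := by
    calc |A * x - e * (B * y)| ≤ |A * x| + |e * (B * y)| := abs_sub _ _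
      _ ≤ 14 * M ^ 3 := by nlinarith
  calc |q * (A * x - e * (B * y))| = |q| * |A * x - e * (B * y)| := abs_mul _ _
    _ ≤ M * (14 * M ^ 3) := mul_le_mul hq h4 (abs_nonneg _) hM
    _ = 14 * M ^ 4 := by ring

set_option maxHeartbeats 2000000 in
/-- If `x ∈ R_k` is nonzero, then `1/x ∈ R_{ck}` for some absolute constant `c`. -/
theorem Rset_inv : ∃ c : ℕ, ∀ k : ℕ, 1 ≤ k → ∀ x : ℂ, x ∈ Rset k → x ≠ 0 →
    x⁻¹ ∈ Rset (c * k) := by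
  refine ⟨11, ?_⟩
  intro k hk x hx hx0
  simp only [Rset, Set.mem_setOf_eq] at hx ⊢
  obtain ⟨a, b, c, d, q, hq, ha, hb, hc, hd, hqb, hxeq⟩ := hx
  set s : ℂ := (Real.sqrt 2 : ℂ) with hs_def
  have hs : s ^ 2 = 2 := by
    rw [hs_def]; norm_cast; exact Real.sq_sqrt (by norm_num)
  have hI : Complex.I ^ 2 = -1 := Complex.I_sq
  set M : ℤ := 2 ^ k with hM_def
  have hM0 : (0 : ℤ) ≤ M := by positivity
  set A : ℤ := a ^ 2 + 2 * b ^ 2 + c ^ 2 + 2 * d ^ 2 with hA_def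
  set B : ℤ := 2 * (a * b + c * d) with hB_def
  have hN : ((a : ℂ) + (b : ℂ) * s + (c : ℂ) * Complex.I + (d : ℂ) * Complex.I * s) ≠ 0 := by
    intro h
    apply hx0
    rw [hxeq, h, zero_div]
  have hAne : A ≠ 0 := by
    intro h
    rw [hA_def] at h
    have ha2 : a = 0 := by
      have h1 : a ^ 2 = 0 := le_antisymm (by nlinarith [sq_nonneg b, sq_nonneg c, sq_nonneg d]) (sq_nonneg a)
      exact (pow_eq_zero_iff two_ne_zero).mp h1
    have hb2 : b = 0 := by
      have h1 : b ^ 2 = 0 := le_antisymm (by nlinarith [sq_nonneg a, sq_nonneg c, sq_nonneg d]) (sq_nonneg b)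
      exact (pow_eq_zero_iff two_ne_zero).mp h1
    have hc2 : c = 0 := by
      have h1 : c ^ 2 = 0 := le_antisymm (by nlinarith [sq_nonneg a, sq_nonneg b, sq_nonneg d]) (sq_nonneg c)
      exact (pow_eq_zero_iff two_ne_zero).mp h1
    have hd2 : d = 0 := by
      have h1 : d ^ 2 = 0 := le_antisymm (by nlinarith [sq_nonneg a, sq_nonneg b, sq_nonneg c]) (sq_nonneg d)
      exact (pow_eq_zero_iff two_ne_zero).mp h1
    apply hN
    rw [ha2, hb2, hc2, hd2]
    push_cast
    ring
  have hq' : A ^ 2 - 2 * B ^ 2 ≠ 0 := by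
    intro h
    have hB0 : B ≠ 0 := by
      intro hB0
      rw [hB0] at h
      apply hAne
      have : A ^ 2 = 0 := by linarith [h]
      exact (pow_eq_zero_iff two_ne_zero).mp this
    have hBr : (B : ℝ) ≠ 0 := Int.cast_ne_zero.mpr hB0
    have hA2 : (A : ℝ) ^ 2 = 2 * (B : ℝ) ^ 2 := by
      have : A ^ 2 = 2 * B ^ 2 := by linarith
      exact_mod_cast congrArg (fun t : ℤ => (t : ℝ)) this
    have h2 : ((A : ℝ) / (B : ℝ)) ^ 2 = 2 := by
      field_simp
      linarith [hA2]
    exact irrational_sqrt_two ⟨|(A : ℚ) / (B : ℚ)|, by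
      push_cast
      rw [← Real.sqrt_sq (abs_nonneg ((A : ℝ) / (B : ℝ))), sq_abs, h2]⟩
  -- bounds on A and B
  have hAb : |A| ≤ 6 * M ^ 2 := by
    rw [hA_def, abs_le]
    constructor <;>
      nlinarith [sq_le_of_abs_le ha, sq_le_of_abs_le hb, sq_le_of_abs_le hc, sq_le_of_abs_le hd,
        sq_nonneg a, sq_nonneg b, sq_nonneg c, sq_nonneg d]
  have hBb : |B| ≤ 4 * M ^ 2 := by
    have h1 : |a * b| ≤ M ^ 2 := by
      rw [abs_mul, sq]; exact mul_le_mul ha hb (abs_nonneg b) hM0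
    have h2 : |c * d| ≤ M ^ 2 := by
      rw [abs_mul, sq]; exact mul_le_mul hc hd (abs_nonneg d) hM0
    have h3 := abs_add_le (a * b) (c * d)
    calc |B| = 2 * |a * b + c * d| := by rw [hB_def, abs_mul]; norm_num
      _ ≤ 4 * M ^ 2 := by linarith
  -- powers of two
  have hM4 : M ^ 4 = 2 ^ (k * 4) := by rw [hM_def, ← pow_mul]
  have hpow : ∀ n : ℕ, n ≤ 11 * k → (2 : ℤ) ^ n ≤ 2 ^ (11 * k) :=
    fun n hn => pow_le_pow_right₀ (by norm_num) hn
  have hM4nn : (0 : ℤ) ≤ M ^ 4 := by positivity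
  have h14 : (14 : ℤ) * M ^ 4 ≤ 2 ^ (11 * k) := by
    calc (14 : ℤ) * M ^ 4 ≤ 16 * M ^ 4 := by linarith
      _ = 2 ^ (k * 4 + 4) := by rw [pow_add, hM4]; ring
      _ ≤ 2 ^ (11 * k) := hpow _ (by omega)
  have h68 : (68 : ℤ) * M ^ 4 ≤ 2 ^ (11 * k) := by
    calc (68 : ℤ) * M ^ 4 ≤ 128 * M ^ 4 := by linarith
      _ = 2 ^ (k * 4 + 7) := by rw [pow_add, hM4]; ring
      _ ≤ 2 ^ (11 * k) := hpow _ (by omega)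
  refine ⟨q * (A * a - 2 * (B * b)), q * (A * b - 1 * (B * a)), -(q * (A * c - 2 * (B * d))),
    -(q * (A * d - 1 * (B * c))), A ^ 2 - 2 * B ^ 2, hq', ?_, ?_, ?_, ?_, ?_, ?_⟩
  · exact le_trans (aux_bound hM0 ha hb hqb hAb hBb (by norm_num)) h14
  · exact le_trans (aux_bound hM0 hb ha hqb hAb hBb (by norm_num)) h14
  · rw [abs_neg]
    exact le_trans (aux_bound hM0 hc hd hqb hAb hBb (by norm_num)) h14
  · rw [abs_neg]
    exact le_trans (aux_bound hM0 hd hc hqb hAb hBb (by norm_num)) h14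
  · have h1 : A ^ 2 ≤ 36 * M ^ 4 := by nlinarith [sq_le_of_abs_le hAb]
    have h2 : B ^ 2 ≤ 16 * M ^ 4 := by nlinarith [sq_le_of_abs_le hBb]
    have h3 : |A ^ 2 - 2 * B ^ 2| ≤ 68 * M ^ 4 := by
      rw [abs_le]
      constructor <;> nlinarith [sq_nonneg A, sq_nonneg B]
    linarith
  · have hq'c : ((A ^ 2 - 2 * B ^ 2 : ℤ) : ℂ) ≠ 0 := Int.cast_ne_zero.mpr hq'
    rw [hxeq, inv_div, div_eq_div_iff hN hq'c]
    rw [hA_def, hB_def]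
    push_cast
    linear_combination ((2)*(d:ℂ)^4*(q:ℂ)*Complex.I^2 + (-1)*(c:ℂ)^2*(d:ℂ)^2*(q:ℂ)*Complex.I^2 + (-2)*(b:ℂ)*(c:ℂ)^2*(d:ℂ)*(q:ℂ)*Complex.I + (-2)*(b:ℂ)^2*(d:ℂ)^2*(q:ℂ) + (2)*(b:ℂ)^2*(d:ℂ)^2*(q:ℂ)*Complex.I^2 + (-1)*(b:ℂ)^2*(c:ℂ)^2*(q:ℂ) + (-2)*(b:ℂ)^4*(q:ℂ) + (2)*(a:ℂ)*(c:ℂ)*(d:ℂ)^2*(q:ℂ)*Complex.I + (2)*(a:ℂ)*(b:ℂ)*(c:ℂ)*(d:ℂ)*(q:ℂ) + (-2)*(a:ℂ)*(b:ℂ)*(c:ℂ)*(d:ℂ)*(q:ℂ)*Complex.I^2 + (-2)*(a:ℂ)*(b:ℂ)^2*(c:ℂ)*(q:ℂ)*Complex.I + (1)*(a:ℂ)^2*(d:ℂ)^2*(q:ℂ)*Complex.I^2 + (2)*(a:ℂ)^2*(b:ℂ)*(d:ℂ)*(q:ℂ)*Complex.I + (1)*(a:ℂ)^2*(b:ℂ)^2*(q:ℂ))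 * hs + ((4)*(d:ℂ)^4*(q:ℂ) + (-4)*(c:ℂ)^2*(d:ℂ)^2*(q:ℂ) + (1)*(c:ℂ)^4*(q:ℂ) + (4)*(b:ℂ)^2*(d:ℂ)^2*(q:ℂ) + (4)*(b:ℂ)^2*(c:ℂ)*(d:ℂ)*(q:ℂ)*s + (2)*(b:ℂ)^2*(c:ℂ)^2*(q:ℂ) + (-4)*(a:ℂ)*(b:ℂ)*(d:ℂ)^2*(q:ℂ)*s + (-8)*(a:ℂ)*(b:ℂ)*(c:ℂ)*(d:ℂ)*(q:ℂ) + (-2)*(a:ℂ)*(b:ℂ)*(c:ℂ)^2*(q:ℂ)*s + (2)*(a:ℂ)^2*(d:ℂ)^2*(q:ℂ) + (2)*(a:ℂ)^2*(c:ℂ)*(d:ℂ)*(q:ℂ)*s + (1)*(a:ℂ)^2*(c:ℂ)^2*(q:ℂ)) * hI
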